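/- With the setup of the previous statement, the support function of Θ₀ = {E[m·l] : m_L ≤ m ≤ m_U P-a.s.} satisfies υ(p, Θ₀) = E[1{⟨p,l⟩ ≤ 0} m_L ⟨p,l⟩] + E[1{⟨p,l⟩ > 0} m_U ⟨p,l⟩] for every p ∈ ℝ^ℓ, and the point θ*(p) = E[m_p · l] lies in Θ₀ with ⟨p, θ*(p)⟩ = υ(p, Θ₀). -/

import Mathlib

/-!
For `m_L ≤ m ≤ m_U` and any real `x` one has `m x ≤ m_L x` when `x ≤ 0` and `m x ≤ m_U x`
when `x > 0`, i.e. `m x ≤ m_p x` for `x = ⟨p, l⟩`. Integrating, `⟨p, E[m l]⟩ = E[m ⟨p, l⟩]` is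
bounded by `E[m_p ⟨p, l⟩] = ⟨p, θ*(p)⟩`, and `θ*(p)` itself lies in `Θ₀` since `m_p` is an
admissible selection. So `⟨p, θ*(p)⟩` is the greatest value of `⟨p, ·⟩` on `Θ₀`, and splitting
`m_p` along the sign of `⟨p, l⟩` gives the stated formula.
-/

open MeasureTheory

/-- The sign-switching selection `m_p`. -/
noncomputable def mSwitch {Ω : Type*} {ℓ : ℕ} (l : Ω → EuclideanSpace ℝ (Fin ℓ))
    (mL mU : Ω → ℝ) (p : EuclideanSpace ℝ (Fin ℓ)) (ω : Ω) : ℝ :=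
  if (inner ℝ p (l ω) : ℝ) ≤ 0 then mL ω else mU ω

/-- The identified set. -/
def ThetaSet {Ω : Type*} [MeasurableSpace Ω] (P : Measure Ω) {ℓ : ℕ}
    (l : Ω → EuclideanSpace ℝ (Fin ℓ)) (mL mU : Ω → ℝ) :
    Set (EuclideanSpace ℝ (Fin ℓ)) :=
  {θ | ∃ m : Ω → ℝ, Measurable m ∧ (∀ᵐ ω ∂P, mL ω ≤ m ω ∧ m ω ≤ mU ω) ∧
    θ = ∫ ω, m ω • l ω ∂P}

open scoped RealInnerProductSpace

lemma mul_le_ite_mul {a m b : ℝ} (x : ℝ) (ham : a ≤ m) (hmb : m ≤ b) :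
    m * x ≤ (if x ≤ 0 then a else b) * x := by
  split_ifs with hx
  · exact mul_le_mul_of_nonpos_right ham hx
  · exact mul_le_mul_of_nonneg_right hmb (le_of_not_ge hx)

lemma integral_mul_inner_eq_inner_integral {Ω E : Type*} [MeasurableSpace Ω] {P : Measure Ω}
    [NormedAddCommGroup E] [InnerProductSpace ℝ E] [CompleteSpace E] {l : Ω → E} {m : Ω → ℝ}
    (hml : Integrable (fun ω => m ω • l ω) P) (p : E) :
    ∫ ω, m ω * ⟪p, l ω⟫ ∂P = ⟪p, ∫ ω, m ω • l ω ∂P⟫ := by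
  simp_rw [← integral_inner hml p, real_inner_smul_right]

section

variable {Ω : Type*} {ℓ : ℕ} {l : Ω → EuclideanSpace ℝ (Fin ℓ)} {mL mU : Ω → ℝ}

lemma abs_mSwitch_le {C : ℝ} (hC : ∀ ω, |mL ω| ≤ C ∧ |mU ω| ≤ C)
    (p : EuclideanSpace ℝ (Fin ℓ)) (ω : Ω) : |mSwitch l mL mU p ω| ≤ C := by
  unfold mSwitch
  split_ifs
  exacts [(hC ω).1, (hC ω).2]

lemma mSwitch_mem_Icc (p : EuclideanSpace ℝ (Fin ℓ)) {ω : Ω} (h : mL ω ≤ mU ω) :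
    mL ω ≤ mSwitch l mL mU p ω ∧ mSwitch l mL mU p ω ≤ mU ω := by
  unfold mSwitch
  split_ifs
  exacts [⟨le_rfl, h⟩, ⟨h, le_rfl⟩]

variable [MeasurableSpace Ω] {P : Measure Ω}

lemma measurable_mSwitch (hl : Measurable l) (hmL : Measurable mL) (hmU : Measurable mU)
    (p : EuclideanSpace ℝ (Fin ℓ)) : Measurable (mSwitch l mL mU p) :=
  Measurable.ite (measurableSet_le (measurable_const.inner hl) measurable_const) hmL hmU

lemma aemeasurable_mSwitch (hl : AEMeasurable l P) (hmL : Measurable mL) (hmU : Measurable mU)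
    (p : EuclideanSpace ℝ (Fin ℓ)) : AEMeasurable (mSwitch l mL mU p) P := by
  refine ⟨mSwitch (hl.mk l) mL mU p, measurable_mSwitch hl.measurable_mk hmL hmU p, ?_⟩
  filter_upwards [hl.ae_eq_mk] with ω hω
  simp only [mSwitch, hω]

lemma integrable_mul_inner (hl : Integrable l P) {m : Ω → ℝ} {C : ℝ}
    (hm : AEStronglyMeasurable m P) (hmC : ∀ᵐ ω ∂P, |m ω| ≤ C) (p : EuclideanSpace ℝ (Fin ℓ)) :
    Integrable (fun ω => m ω * ⟪p, l ω⟫) P :=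
  (hl.const_inner p).bdd_mul hm hmC

lemma integral_smul_mem_thetaSet {m : Ω → ℝ} (hm : AEMeasurable m P)
    (hmI : ∀ᵐ ω ∂P, mL ω ≤ m ω ∧ m ω ≤ mU ω) :
    ∫ ω, m ω • l ω ∂P ∈ ThetaSet P l mL mU := by
  refine ⟨hm.mk m, hm.measurable_mk, ?_, integral_congr_ae ?_⟩
  · filter_upwards [hmI, hm.ae_eq_mk] with ω hω hmk
    rwa [← hmk]
  · filter_upwards [hm.ae_eq_mk] with ω hmk
    rw [hmk]

lemma integrable_mSwitch_mul_inner (hl : Integrable l P) (hmL : Measurable mL)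
    (hmU : Measurable mU) {C : ℝ} (hC : ∀ ω, |mL ω| ≤ C ∧ |mU ω| ≤ C)
    (p : EuclideanSpace ℝ (Fin ℓ)) :
    Integrable (fun ω => mSwitch l mL mU p ω * ⟪p, l ω⟫) P :=
  integrable_mul_inner hl (aemeasurable_mSwitch hl.aemeasurable hmL hmU p).aestronglyMeasurable
    (.of_forall (abs_mSwitch_le hC p)) p

lemma inner_integral_mSwitch_smul (hl : Integrable l P) (hmL : Measurable mL)
    (hmU : Measurable mU) {C : ℝ} (hC : ∀ ω, |mL ω| ≤ C ∧ |mU ω| ≤ C)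
    (p : EuclideanSpace ℝ (Fin ℓ)) :
    ⟪p, ∫ ω, mSwitch l mL mU p ω • l ω ∂P⟫ = ∫ ω, mSwitch l mL mU p ω * ⟪p, l ω⟫ ∂P :=
  (integral_mul_inner_eq_inner_integral (hl.bdd_smul C
    (aemeasurable_mSwitch hl.aemeasurable hmL hmU p).aestronglyMeasurable
    (.of_forall (abs_mSwitch_le hC p))) p).symm

lemma inner_le_of_mem_thetaSet (hl : Integrable l P) (hmL : Measurable mL)
    (hmU : Measurable mU) {C : ℝ} (hC : ∀ ω, |mL ω| ≤ C ∧ |mU ω| ≤ C)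
    (p : EuclideanSpace ℝ (Fin ℓ)) {θ : EuclideanSpace ℝ (Fin ℓ)}
    (hθ : θ ∈ ThetaSet P l mL mU) :
    ⟪p, θ⟫ ≤ ∫ ω, mSwitch l mL mU p ω * ⟪p, l ω⟫ ∂P := by
  obtain ⟨m, hm, hmI, rfl⟩ := hθ
  have hmC : ∀ᵐ ω ∂P, |m ω| ≤ C := by
    filter_upwards [hmI] with ω hω
    exact (abs_le_max_abs_abs hω.1 hω.2).trans (max_le (hC ω).1 (hC ω).2)
  rw [← integral_mul_inner_eq_inner_integral (hl.bdd_smul C hm.aestronglyMeasurable hmC)]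
  refine integral_mono_ae (integrable_mul_inner hl hm.aestronglyMeasurable hmC p)
    (integrable_mSwitch_mul_inner hl hmL hmU hC p) ?_
  filter_upwards [hmI] with ω hω
  exact mul_le_ite_mul _ hω.1 hω.2

lemma integral_mSwitch_smul_mem_thetaSet (hl : AEMeasurable l P) (hmL : Measurable mL)
    (hmU : Measurable mU) (hle : ∀ᵐ ω ∂P, mL ω ≤ mU ω) (p : EuclideanSpace ℝ (Fin ℓ)) :
    ∫ ω, mSwitch l mL mU p ω • l ω ∂P ∈ ThetaSet P l mL mU :=
  integral_smul_mem_thetaSet (aemeasurable_mSwitch hl hmL hmU p)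
    (hle.mono fun _ => mSwitch_mem_Icc p)

end

theorem stmt4 {Ω : Type*} [MeasurableSpace Ω] (P : Measure Ω)
    {ℓ : ℕ} (l : Ω → EuclideanSpace ℝ (Fin ℓ)) (hl : Integrable l P)
    (mL mU : Ω → ℝ) (hmL : Measurable mL) (hmU : Measurable mU)
    (hle : ∀ᵐ ω ∂P, mL ω ≤ mU ω)
    (hbdd : ∃ C : ℝ, ∀ ω, |mL ω| ≤ C ∧ |mU ω| ≤ C)
    (p : EuclideanSpace ℝ (Fin ℓ)) :
    sSup ((fun θ => (inner ℝ p θ : ℝ)) '' ThetaSet P l mL mU) =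
      (∫ ω, (if (inner ℝ p (l ω) : ℝ) ≤ 0 then mL ω else 0) * (inner ℝ p (l ω) : ℝ) ∂P) +
      (∫ ω, (if 0 < (inner ℝ p (l ω) : ℝ) then mU ω else 0) * (inner ℝ p (l ω) : ℝ) ∂P) ∧
    (∫ ω, mSwitch l mL mU p ω • l ω ∂P) ∈ ThetaSet P l mL mU ∧
    (inner ℝ p (∫ ω, mSwitch l mL mU p ω • l ω ∂P) : ℝ) =
      sSup ((fun θ => (inner ℝ p θ : ℝ)) '' ThetaSet P l mL mU) := by
  obtain ⟨C, hC⟩ := hbdd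
  have hmem := integral_mSwitch_smul_mem_thetaSet hl.aemeasurable hmL hmU hle p
  have hval := inner_integral_mSwitch_smul hl hmL hmU hC p
  have hsup : sSup ((fun θ => ⟪p, θ⟫) '' ThetaSet P l mL mU) =
      ⟪p, ∫ ω, mSwitch l mL mU p ω • l ω ∂P⟫ := by
    refine IsGreatest.csSup_eq ⟨Set.mem_image_of_mem _ hmem, ?_⟩
    rintro _ ⟨θ, hθ, rfl⟩
    exact hval ▸ inner_le_of_mem_thetaSet hl hmL hmU hC p hθ
  refine ⟨?_, hmem, hsup.symm⟩
  -- `|mL ω| ≤ C` forces `0 ≤ C` at each `ω`, which bounds the truncated coefficients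
  have hC₀ : ∀ ω, |(0 : ℝ)| ≤ C := fun ω => by rw [abs_zero]; exact (abs_nonneg _).trans (hC ω).1
  have hneg := integrable_mSwitch_mul_inner hl hmL measurable_const (fun ω => ⟨(hC ω).1, hC₀ ω⟩) p
  have hpos := integrable_mSwitch_mul_inner hl measurable_const hmU (fun ω => ⟨hC₀ ω, (hC ω).2⟩) p
  simp_rw [← not_le, ite_not]
  rw [hsup, hval]
  refine (integral_congr_ae (.of_forall fun ω => ?_)).trans (integral_add hneg hpos)
  simp only [mSwitch]
  split_ifs <;> ring
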